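/- Let v be an n-dimensional unit vector with entries in D[ω] whose least δ-exponent k is positive. Then there exists a finite product G of matrices of the forms X_{[α,β]}, H_{[α,β]}, ω_{[α]} such that the least δ-exponent of Gv is strictly less than k. -/

import Mathlib

noncomputable section
open Complex

def ω : ℂ := Complex.exp (Real.pi * Complex.I / 4)

def δ : ℂ := 1 + ω

def inZω (x : ℂ) : Prop := ∃ a b c d : ℤ, x = a * ω^3 + b * ω^2 + c * ω + d

def inD (x : ℂ) : Prop := ∃ a : ℤ, ∃ n : ℕ, x = a / 2^n

def inDω (x : ℂ) : Prop :=
  ∃ a b c d : ℂ, inD a ∧ inD b ∧ inD c ∧ inD d ∧ x = a * ω^3 + b * ω^2 + c * ω + d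

def dvdZ (a b : ℂ) : Prop := ∃ t : ℂ, inZω t ∧ b = a * t

def isLde (n : ℕ) (k : ℕ) (v : Fin n → ℂ) : Prop :=
  (∀ i, inZω (δ^k * v i)) ∧ ∀ j : ℕ, j < k → ¬ (∀ i, inZω (δ^j * v i))

def Xmat (n : ℕ) (α β : Fin n) : Matrix (Fin n) (Fin n) ℂ :=
  Matrix.of fun i j =>
    if i = α then (if j = β then 1 else 0)
    else if i = β then (if j = α then 1 else 0)
    else if i = j then 1 else 0

def Hmat (n : ℕ) (α β : Fin n) : Matrix (Fin n) (Fin n) ℂ :=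
  Matrix.of fun i j =>
    if i = α ∧ j = α then (Real.sqrt 2 : ℂ)⁻¹
    else if i = α ∧ j = β then (Real.sqrt 2 : ℂ)⁻¹
    else if i = β ∧ j = α then (Real.sqrt 2 : ℂ)⁻¹
    else if i = β ∧ j = β then -(Real.sqrt 2 : ℂ)⁻¹
    else if i = j then 1 else 0

def Wmat (n : ℕ) (α : Fin n) : Matrix (Fin n) (Fin n) ℂ :=
  Matrix.of fun i j => if i = j then (if i = α then ω else 1) else 0

def gens (n : ℕ) : Set (Matrix (Fin n) (Fin n) ℂ) :=
  {M | (∃ α β : Fin n, α < β ∧ (M = Xmat n α β ∨ M = Hmat n α β)) ∨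
       (∃ α : Fin n, M = Wmat n α)}

open ComplexConjugate Matrix

/-!
Scaling `v` by `δᵏ` gives a vector `u` over `ℤ[ω]` with `∑ conj uᵢ * uᵢ = (conj δ * δ)ᵏ ≡ 0 (mod δ)`.
Since `ℤ[ω]/(δ) ≅ 𝔽₂` and `conj x * x ≡ 1 (mod δ)` whenever `δ ∤ x`, an even number of entries of
`u` are not divisible by `δ`. Modulo `δ³` each of them is congruent to a power of `ω`, so for two
of them, `x` and `y`, some `ω_[β]ᵃ` makes `x ≡ ωᵃ y ≡ -ωᵃ y (mod δ³)` (as `δ³ ∣ 2`); then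
`H_[α,β]` replaces them by `(x ± ωᵃ y)/√2`, both divisible by `δ` because `√2` is `δ²` times a
unit. Clearing the entries pair by pair yields `G` with `δ ∣ G u = δᵏ G v`, so `δᵏ⁻¹ G v` is
integral.
-/

lemma omega_eq : ω = ((Real.sqrt 2 / 2 : ℝ) : ℂ) * (1 + I) := by
  rw [ω, show (Real.pi : ℂ) * I / 4 = ((Real.pi / 4 : ℝ) : ℂ) * I by push_cast; ring,
    exp_mul_I, ← ofReal_cos, ← ofReal_sin, Real.cos_pi_div_four, Real.sin_pi_div_four]
  ring

lemma ofReal_sqrt_two_sq : ((Real.sqrt 2 : ℝ) : ℂ) ^ 2 = 2 := by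
  norm_cast; simp

lemma omega_sq : ω ^ 2 = I := by
  rw [omega_eq]; push_cast
  linear_combination (1 + I) ^ 2 / 4 * ofReal_sqrt_two_sq + I_sq / 2

lemma omega_pow_four : ω ^ 4 = -1 := by
  rw [show ω ^ 4 = (ω ^ 2) ^ 2 by ring, omega_sq, I_sq]

lemma omega_pow_eight : ω ^ 8 = 1 := by
  rw [show ω ^ 8 = (ω ^ 4) ^ 2 by ring, omega_pow_four]; norm_num

lemma ofReal_sqrt_two_eq : ((Real.sqrt 2 : ℝ) : ℂ) = ω - ω ^ 3 := by
  rw [omega_eq]; push_cast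
  linear_combination ((Real.sqrt 2 : ℂ) * (1 + I) ^ 3 / 8) * ofReal_sqrt_two_sq
    + ((Real.sqrt 2 : ℂ) * (3 + I) / 4) * I_sq

lemma ofReal_sqrt_two_mul_eq_delta_sq : ((Real.sqrt 2 : ℝ) : ℂ) * (1 + ω + ω ^ 2) = δ ^ 2 := by
  rw [ofReal_sqrt_two_eq, δ]; linear_combination (-ω - 1) * omega_pow_four

lemma conj_omega : conj ω = -ω ^ 3 := by
  rw [omega_eq]
  simp only [map_mul, map_add, conj_I, conj_ofReal, map_one]
  push_cast
  linear_combination ((Real.sqrt 2 : ℂ) * (1 + I) ^ 3 / 8) * ofReal_sqrt_two_sq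
    + ((Real.sqrt 2 : ℂ) * (3 + I) / 4) * I_sq

lemma conj_delta : conj δ = -ω ^ 3 * δ := by
  rw [δ, map_add, map_one, conj_omega]; linear_combination omega_pow_four

lemma delta_ne_zero : δ ≠ 0 := by
  intro h
  have : I = 1 := by rw [← omega_sq, show ω = -1 by rw [δ] at h; linear_combination h]; ring
  simpa using congrArg im this

lemma eq_zero_of_intCast_add_mul_sqrt_two_eq_zero {p q : ℤ} (h : (p : ℝ) + q * Real.sqrt 2 = 0) :
    p = 0 ∧ q = 0 := by
  obtain rfl : q = 0 := by
    by_contra hq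
    exact ((irrational_sqrt_two.intCast_mul hq).intCast_add p).ne_zero h
  simpa using h

lemma eq_zero_of_omega_coords_eq_zero {a b c d : ℤ}
    (h : (a : ℂ) * ω ^ 3 + b * ω ^ 2 + c * ω + d = 0) : a = 0 ∧ b = 0 ∧ c = 0 ∧ d = 0 := by
  rw [show ω ^ 3 = ω ^ 2 * ω by ring, omega_sq, omega_eq, Complex.ext_iff] at h
  simp only [mul_re, mul_im, add_re, add_im, ofReal_re, ofReal_im, I_re, I_im,
    intCast_re, intCast_im, one_re, one_im, zero_re, zero_im] at h
  obtain ⟨hre, him⟩ := h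
  have h₁ := eq_zero_of_intCast_add_mul_sqrt_two_eq_zero (p := 2 * d) (q := c - a)
    (by push_cast; linear_combination 2 * hre)
  have h₂ := eq_zero_of_intCast_add_mul_sqrt_two_eq_zero (p := 2 * b) (q := a + c)
    (by push_cast; linear_combination 2 * him)
  omega

def Zω : Subring ℂ where
  carrier := {x | inZω x}
  zero_mem' := ⟨0, 0, 0, 0, by simp⟩
  one_mem' := ⟨0, 0, 0, 1, by simp⟩
  add_mem' := by
    rintro _ _ ⟨a, b, c, d, rfl⟩ ⟨a', b', c', d', rfl⟩
    exact ⟨a + a', b + b', c + c', d + d', by push_cast; ring⟩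
  neg_mem' := by
    rintro _ ⟨a, b, c, d, rfl⟩
    exact ⟨-a, -b, -c, -d, by push_cast; ring⟩
  mul_mem' := by
    rintro _ _ ⟨a, b, c, d, rfl⟩ ⟨a', b', c', d', rfl⟩
    refine ⟨a * d' + b * c' + c * b' + d * a', b * d' + c * c' + d * b' - a * a',
      c * d' + d * c' - a * b' - b * a', d * d' - a * c' - b * b' - c * a', ?_⟩
    push_cast
    linear_combination
      ((a : ℂ) * a' * ω ^ 2 + (a * b' + b * a') * ω + (a * c' + b * b' + c * a')) * omega_pow_four

lemma omega_mem_Zω : ω ∈ Zω := ⟨0, 0, 1, 0, by simp⟩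

lemma delta_mem_Zω : δ ∈ Zω := add_mem (one_mem _) omega_mem_Zω

lemma conj_mem_Zω {x : ℂ} (hx : x ∈ Zω) : conj x ∈ Zω := by
  obtain ⟨a, b, c, d, rfl⟩ := hx
  refine ⟨-c, -b, -a, d, ?_⟩
  simp only [map_add, map_mul, map_pow, conj_omega, map_intCast]
  push_cast
  linear_combination ((b : ℂ) * ω ^ 2 + a * ω - a * ω ^ 5) * omega_pow_four

namespace dvdZ

variable {a x y : ℂ}

lemma add (hx : dvdZ a x) (hy : dvdZ a y) : dvdZ a (x + y) := by
  obtain ⟨s, hs, rfl⟩ := hx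
  obtain ⟨t, ht, rfl⟩ := hy
  exact ⟨s + t, Zω.add_mem hs ht, by ring⟩

lemma neg (hx : dvdZ a x) : dvdZ a (-x) := by
  obtain ⟨s, hs, rfl⟩ := hx
  exact ⟨-s, Zω.neg_mem hs, by ring⟩

lemma sub (hx : dvdZ a x) (hy : dvdZ a y) : dvdZ a (x - y) := by
  simpa [sub_eq_add_neg] using hx.add hy.neg

lemma mul_left (hy : y ∈ Zω) (hx : dvdZ a x) : dvdZ a (y * x) := by
  obtain ⟨s, hs, rfl⟩ := hx
  exact ⟨y * s, mul_mem hy hs, by ring⟩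

lemma mem (ha : a ∈ Zω) (hx : dvdZ a x) : x ∈ Zω := by
  obtain ⟨s, hs, rfl⟩ := hx
  exact mul_mem ha hs

lemma of_pow_succ {m : ℕ} (ha : a ∈ Zω) (hx : dvdZ (a ^ (m + 1)) x) : dvdZ a x := by
  obtain ⟨s, hs, rfl⟩ := hx
  exact ⟨a ^ m * s, mul_mem (pow_mem ha m) hs, by ring⟩

end dvdZ

lemma dvdZ_sum {ι : Type*} {a : ℂ} (s : Finset ι) {f : ι → ℂ} (h : ∀ i ∈ s, dvdZ a (f i)) :
    dvdZ a (∑ i ∈ s, f i) := by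
  classical
  induction s using Finset.induction_on with
  | empty => exact ⟨0, Zω.zero_mem, by simp⟩
  | insert i s hi ih =>
    rw [Finset.sum_insert hi]
    exact (h i (Finset.mem_insert_self i s)).add (ih fun j hj => h j (Finset.mem_insert_of_mem hj))

lemma delta_pow_three_dvdZ_two : dvdZ (δ ^ 3) 2 :=
  ⟨-2 + 2 * ω - ω ^ 2 - ω ^ 3, ⟨-1, -1, 2, -2, by push_cast; ring⟩,
    by rw [δ]; linear_combination (4 + 4 * ω + ω ^ 2) * omega_pow_four⟩

lemma delta_dvdZ_two : dvdZ δ 2 := delta_pow_three_dvdZ_two.of_pow_succ delta_mem_Zω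

lemma not_delta_dvdZ_one : ¬ dvdZ δ 1 := by
  rintro ⟨_, ⟨a, b, c, d, rfl⟩, h⟩
  have := eq_zero_of_omega_coords_eq_zero (a := a + b) (b := b + c) (c := c + d) (d := d - a - 1)
    (by rw [δ] at h; push_cast; linear_combination -h - a * omega_pow_four)
  omega

lemma exists_delta_dvdZ_sub_intCast {x : ℂ} (hx : x ∈ Zω) : ∃ s : ℤ, dvdZ δ (x - s) := by
  obtain ⟨a, b, c, d, rfl⟩ := hx
  refine ⟨d - c + b - a, a * (ω ^ 2 - ω + 1) + b * (ω - 1) + c,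
    ⟨0, a, b - a, a - b + c, by push_cast; ring⟩, ?_⟩
  rw [δ]; push_cast; ring

lemma exists_digit_add_delta_mul {x : ℂ} (hx : x ∈ Zω) :
    ∃ e : ℂ, (e = 0 ∨ e = 1) ∧ ∃ y ∈ Zω, x = e + δ * y := by
  obtain ⟨s, hs⟩ := exists_delta_dvdZ_sub_intCast hx
  have hsplit : dvdZ δ (x - ((s % 2 : ℤ) : ℂ)) := by
    convert hs.add (delta_dvdZ_two.mul_left (intCast_mem Zω (s / 2))) using 1
    have hmod := congrArg (Int.cast : ℤ → ℂ) (Int.emod_add_mul_ediv s 2)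
    push_cast at hmod
    linear_combination -hmod
  obtain ⟨y, hy, hxy⟩ := hsplit
  refine ⟨((s % 2 : ℤ) : ℂ), ?_, y, hy, by linear_combination hxy⟩
  rcases Int.emod_two_eq_zero_or_one s with h | h <;> simp [h]

lemma exists_eq_one_add_delta_mul {x : ℂ} (hx : x ∈ Zω) (hnx : ¬ dvdZ δ x) :
    ∃ y ∈ Zω, x = 1 + δ * y := by
  obtain ⟨e, he, y, hy, rfl⟩ := exists_digit_add_delta_mul hx
  obtain rfl : e = 1 := he.resolve_left <| by
    rintro rfl
    exact hnx ⟨y, hy, zero_add _⟩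
  exact ⟨y, hy, rfl⟩

/-- The residues `1`, `1 + δ`, `1 + δ²`, `1 + δ + δ²` of the units of `ℤ[ω]/(δ³)` are those of
`1`, `ω`, `ω²`, `ω³`. -/
lemma exists_eq_omega_pow_add_delta_pow_three_mul {x : ℂ} (hx : x ∈ Zω) (hnx : ¬ dvdZ δ x) :
    ∃ p : ℕ, ∃ X ∈ Zω, x = ω ^ p + δ ^ 3 * X := by
  obtain ⟨y₀, hy₀, rfl⟩ := exists_eq_one_add_delta_mul hx hnx
  obtain ⟨e₁, he₁, y₁, hy₁, rfl⟩ := exists_digit_add_delta_mul hy₀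
  obtain ⟨e₂, he₂, X, hX, rfl⟩ := exists_digit_add_delta_mul hy₁
  rcases he₁ with rfl | rfl <;> rcases he₂ with rfl | rfl
  · exact ⟨0, X, hX, by ring⟩
  · exact ⟨2, X + (-1 + ω ^ 2 - 2 * ω ^ 3), add_mem hX ⟨-2, 1, 0, -1, by push_cast; ring⟩,
      by rw [δ]; linear_combination (3 + 5 * ω + 2 * ω ^ 2) * omega_pow_four⟩
  · exact ⟨1, X + (-2 + 2 * ω - ω ^ 2 - ω ^ 3), add_mem hX ⟨-1, -1, 2, -2, by push_cast; ring⟩,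
      by rw [δ]; linear_combination (4 + 4 * ω + ω ^ 2) * omega_pow_four⟩
  · exact ⟨3, X - ω ^ 3, sub_mem hX (pow_mem omega_mem_Zω 3),
      by rw [δ]; linear_combination (3 + 3 * ω + ω ^ 2) * omega_pow_four⟩

lemma exists_delta_pow_three_dvdZ_add_and_sub {x y : ℂ} (hx : x ∈ Zω) (hnx : ¬ dvdZ δ x)
    (hy : y ∈ Zω) (hny : ¬ dvdZ δ y) :
    ∃ a : ℕ, dvdZ (δ ^ 3) (x + ω ^ a * y) ∧ dvdZ (δ ^ 3) (x - ω ^ a * y) := by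
  obtain ⟨p, X, hX, rfl⟩ := exists_eq_omega_pow_add_delta_pow_three_mul hx hnx
  obtain ⟨q, Y, hY, rfl⟩ := exists_eq_omega_pow_add_delta_pow_three_mul hy hny
  have hω : ω ^ (p + 7 * q) * ω ^ q = ω ^ p := by
    rw [← pow_add, show p + 7 * q + q = p + 8 * q by ring, pow_add, pow_mul, omega_pow_eight,
      one_pow, mul_one]
  have hpow : ω ^ (p + 7 * q) ∈ Zω := pow_mem omega_mem_Zω _
  have hsub : dvdZ (δ ^ 3) (ω ^ p + δ ^ 3 * X - ω ^ (p + 7 * q) * (ω ^ q + δ ^ 3 * Y)) :=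
    ⟨X - ω ^ (p + 7 * q) * Y, sub_mem hX (mul_mem hpow hY), by linear_combination -hω⟩
  refine ⟨p + 7 * q, ?_, hsub⟩
  convert hsub.add (delta_pow_three_dvdZ_two.mul_left
    (mul_mem hpow (add_mem (pow_mem omega_mem_Zω q) (mul_mem (pow_mem delta_mem_Zω 3) hY))))
    using 1
  ring

lemma delta_dvdZ_conj_mul_self_sub_one {x : ℂ} (hx : x ∈ Zω) (hnx : ¬ dvdZ δ x) :
    dvdZ δ (conj x * x - 1) := by
  obtain ⟨y, hy, rfl⟩ := exists_eq_one_add_delta_mul hx hnx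
  refine ⟨y - ω ^ 3 * conj y * (1 + δ * y),
    sub_mem hy (mul_mem (mul_mem (pow_mem omega_mem_Zω 3) (conj_mem_Zω hy)) hx), ?_⟩
  rw [map_add, map_one, map_mul, conj_delta]
  ring

lemma delta_dvdZ_sqrt_two_inv_mul {x : ℂ} (hx : dvdZ (δ ^ 3) x) :
    dvdZ δ (((Real.sqrt 2 : ℝ) : ℂ)⁻¹ * x) := by
  obtain ⟨t, ht, rfl⟩ := hx
  have hsqrt : ((Real.sqrt 2 : ℝ) : ℂ) ≠ 0 := by simp
  refine ⟨t * (1 + ω + ω ^ 2), mul_mem ht (show _ ∈ Zω from ⟨0, 1, 1, 1, by push_cast; ring⟩), ?_⟩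
  rw [inv_mul_eq_iff_eq_mul₀ hsqrt]
  linear_combination (-δ * t) * ofReal_sqrt_two_mul_eq_delta_sq

lemma mem_Zω_of_delta_dvdZ_delta_mul {x : ℂ} (h : dvdZ δ (δ * x)) : x ∈ Zω := by
  obtain ⟨t, ht, hxt⟩ := h
  rwa [mul_left_cancel₀ delta_ne_zero hxt]

section

variable {n : ℕ}

lemma even_card_of_delta_dvdZ_sum_conj_mul_self (u : Fin n → ℂ) (hu : ∀ i, u i ∈ Zω)
    (hsum : dvdZ δ (∑ i, conj (u i) * u i))
    (B : Finset (Fin n)) (hB : ∀ i, i ∈ B ↔ ¬ dvdZ δ (u i)) : Even B.card := by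
  classical
  have hterm : ∀ i, dvdZ δ (conj (u i) * u i - if i ∈ B then 1 else 0) := by
    intro i
    by_cases hi : i ∈ B
    · simpa [hi] using delta_dvdZ_conj_mul_self_sub_one (hu i) ((hB i).1 hi)
    · have hdi : dvdZ δ (u i) := not_not.1 (mt (hB i).2 hi)
      simpa [hi] using hdi.mul_left (conj_mem_Zω (hu i))
  have hcard : dvdZ δ (B.card : ℂ) := by
    simpa [Finset.sum_sub_distrib] using hsum.sub (dvdZ_sum Finset.univ fun i _ => hterm i)
  rcases Nat.even_or_odd B.card with h | ⟨m, hm⟩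
  · exact h
  refine absurd ?_ not_delta_dvdZ_one
  convert hcard.sub (delta_dvdZ_two.mul_left (natCast_mem Zω m)) using 1
  rw [hm]; push_cast; ring

lemma Wmat_pow_mulVec_apply (α : Fin n) (a : ℕ) (w : Fin n → ℂ) (i : Fin n) :
    (Wmat n α ^ a *ᵥ w) i = if i = α then ω ^ a * w i else w i := by
  have hdiag : Wmat n α = diagonal fun i => if i = α then ω else 1 := by
    ext i j
    by_cases h : i = j <;> simp [Wmat, diagonal, h]
  rw [hdiag, diagonal_pow, mulVec_diagonal]
  split_ifs <;> simp [*]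

lemma Hmat_mulVec_apply {α β : Fin n} (hαβ : α ≠ β) (w : Fin n → ℂ) (i : Fin n) :
    (Hmat n α β *ᵥ w) i =
      if i = α then ((Real.sqrt 2 : ℝ) : ℂ)⁻¹ * (w α + w β)
      else if i = β then ((Real.sqrt 2 : ℝ) : ℂ)⁻¹ * (w α - w β)
      else w i := by
  simp only [mulVec, dotProduct]
  split_ifs with hα hβ
  · rw [Fintype.sum_eq_add α β hαβ fun x hx => by
      simp [Hmat, hα, hαβ, hx.1, hx.2, Ne.symm hx.1]]
    simp [Hmat, hα]; ring
  · rw [Fintype.sum_eq_add α β hαβ fun x hx => by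
      simp [Hmat, hβ, hx.1, hx.2, Ne.symm hx.2]]
    simp [Hmat, hβ, hαβ, hαβ.symm]; ring
  · rw [Fintype.sum_eq_single i fun x hx => by simp [Hmat, hα, hβ, Ne.symm hx]]
    simp [Hmat, hα, hβ]

lemma exists_mem_closure_clear_pair (w : Fin n → ℂ) (hw : ∀ i, w i ∈ Zω) {α β : Fin n}
    (hαβ : α < β) (hα : ¬ dvdZ δ (w α)) (hβ : ¬ dvdZ δ (w β)) :
    ∃ G ∈ Submonoid.closure (gens n), (∀ i, i ≠ α → i ≠ β → (G *ᵥ w) i = w i) ∧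
      dvdZ δ ((G *ᵥ w) α) ∧ dvdZ δ ((G *ᵥ w) β) := by
  obtain ⟨a, hadd, hsub⟩ := exists_delta_pow_three_dvdZ_add_and_sub (hw α) hα (hw β) hβ
  have hH : Hmat n α β ∈ Submonoid.closure (gens n) :=
    Submonoid.subset_closure (Or.inl ⟨α, β, hαβ, Or.inr rfl⟩)
  have hW : Wmat n β ∈ Submonoid.closure (gens n) := Submonoid.subset_closure (Or.inr ⟨β, rfl⟩)
  refine ⟨Hmat n α β * Wmat n β ^ a, mul_mem hH (pow_mem hW a), ?_⟩
  simp only [← mulVec_mulVec, Hmat_mulVec_apply hαβ.ne, Wmat_pow_mulVec_apply, hαβ.ne,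
    if_true, if_false]
  refine ⟨fun i hiα hiβ => by simp [hiα, hiβ], delta_dvdZ_sqrt_two_inv_mul hadd, ?_⟩
  simpa [hαβ.ne'] using delta_dvdZ_sqrt_two_inv_mul hsub

lemma exists_mem_closure_forall_delta_dvdZ (w : Fin n → ℂ) (hw : ∀ i, w i ∈ Zω)
    (B : Finset (Fin n)) (hB : ∀ i, i ∈ B ↔ ¬ dvdZ δ (w i)) (heven : Even B.card) :
    ∃ G ∈ Submonoid.closure (gens n), ∀ i, dvdZ δ ((G *ᵥ w) i) := by
  classical
  induction B using Finset.strongInduction generalizing w with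
  | H B ih =>
  rcases B.eq_empty_or_nonempty with rfl | hne
  · exact ⟨1, one_mem _, fun i => by simpa using hB i⟩
  have hα := B.min'_mem hne
  obtain ⟨β, hβ⟩ : (B.erase (B.min' hne)).Nonempty := by
    rw [← Finset.card_pos, Finset.card_erase_of_mem hα]
    obtain ⟨m, hm⟩ := heven
    have := hne.card_pos
    omega
  obtain ⟨G, hG, hfix, hdα, hdβ⟩ := exists_mem_closure_clear_pair w hw
    (B.min'_lt_of_mem_erase_min' hne hβ) ((hB _).1 hα) ((hB β).1 (Finset.mem_of_mem_erase hβ))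
  have hw' : ∀ i, (G *ᵥ w) i ∈ Zω := by
    intro i
    by_cases hiα : i = B.min' hne
    · exact hiα ▸ hdα.mem delta_mem_Zω
    by_cases hiβ : i = β
    · exact hiβ ▸ hdβ.mem delta_mem_Zω
    exact hfix i hiα hiβ ▸ hw i
  have hB' : ∀ i, i ∈ (B.erase (B.min' hne)).erase β ↔ ¬ dvdZ δ ((G *ᵥ w) i) := by
    intro i
    by_cases hiα : i = B.min' hne
    · simp [hiα, hdα]
    by_cases hiβ : i = β
    · simp [hiβ, hdβ]
    simp [hiα, hiβ, hfix i hiα hiβ, hB i]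
  have heven' : Even ((B.erase (B.min' hne)).erase β).card := by
    rw [Finset.card_erase_of_mem hβ, Finset.card_erase_of_mem hα]
    obtain ⟨m, hm⟩ := heven
    exact ⟨m - 1, by omega⟩
  obtain ⟨G', hG', hdvd⟩ := ih _ ((Finset.erase_ssubset hβ).trans (Finset.erase_ssubset hα))
    (G *ᵥ w) hw' hB' heven'
  exact ⟨G' * G, mul_mem hG' hG, by simpa [mulVec_mulVec] using hdvd⟩

lemma exists_isLde_le {j : ℕ} {w : Fin n → ℂ} (h : ∀ i, inZω (δ ^ j * w i)) :
    ∃ k ≤ j, isLde n k w := by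
  classical
  have hex : ∃ j, ∀ i, inZω (δ ^ j * w i) := ⟨j, h⟩
  exact ⟨Nat.find hex, Nat.find_min' hex h, Nat.find_spec hex, fun _ => Nat.find_min hex⟩

end

theorem lde_reduction_step_general (n : ℕ) (v : Fin n → ℂ) (k : ℕ)
    (hunit : (∑ i, (starRingEnd ℂ) (v i) * v i) = 1)
    (hlde : isLde n k v) (hk : 0 < k) :
    ∃ L : List (Matrix (Fin n) (Fin n) ℂ),
      (∀ M ∈ L, M ∈ gens n) ∧
      ∃ k' : ℕ, k' < k ∧ isLde n k' (L.prod.mulVec v) := by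
  classical
  obtain ⟨k, rfl⟩ := Nat.exists_eq_add_one_of_ne_zero hk.ne'
  set u := δ ^ (k + 1) • v
  have hu : ∀ i, u i ∈ Zω := hlde.1
  have hnorm : dvdZ δ (∑ i, conj (u i) * u i) := by
    refine ⟨conj δ ^ (k + 1) * δ ^ k,
      mul_mem (pow_mem (conj_mem_Zω delta_mem_Zω) _) (pow_mem delta_mem_Zω _), ?_⟩
    calc ∑ i, conj (u i) * u i = conj δ ^ (k + 1) * δ ^ (k + 1) * ∑ i, conj (v i) * v i := by
          rw [Finset.mul_sum]
          exact Finset.sum_congr rfl fun i _ => by simp [u]; ring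
      _ = δ * (conj δ ^ (k + 1) * δ ^ k) := by rw [hunit]; ring
  obtain ⟨G, hG, hdvd⟩ := exists_mem_closure_forall_delta_dvdZ u hu
    (Finset.univ.filter fun i => ¬ dvdZ δ (u i)) (by simp)
    (even_card_of_delta_dvdZ_sum_conj_mul_self u hu hnorm _ (by simp))
  obtain ⟨L, hL, rfl⟩ := Submonoid.exists_list_of_mem_closure hG
  obtain ⟨k', hk', hlde'⟩ := exists_isLde_le (j := k) fun i =>
    mem_Zω_of_delta_dvdZ_delta_mul (by simpa [u, mulVec_smul, pow_succ', mul_assoc] using hdvd i)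
  exact ⟨L, hL, k', by omega, hlde'⟩

theorem lde_reduction_step (n : ℕ) (v : Fin n → ℂ) (k : ℕ)
    (hD : ∀ i, inDω (v i))
    (hunit : (∑ i, (starRingEnd ℂ) (v i) * v i) = 1)
    (hlde : isLde n k v) (hk : 0 < k) :
    ∃ L : List (Matrix (Fin n) (Fin n) ℂ),
      (∀ M ∈ L, M ∈ gens n) ∧
      ∃ k' : ℕ, k' < k ∧ isLde n k' (L.prod.mulVec v) :=
  lde_reduction_step_general n v k hunit hlde hk
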